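/- Let κ ≤ 𝔠 be an uncountable cardinal with cf(κ) > ω. Then there exists a family {X_α : α < 𝔠} of 𝔠 many pairwise distinct subsets of the Cantor space 2^ω, each of size κ, such that X_α and X_β are homeomorphic (as subspaces of 2^ω) for all α, β < 𝔠, but for all α ≠ β the Ψ-spaces Ψ(𝒜_{X_α}) and Ψ(𝒜_{X_β}) are not homeomorphic. -/

import Mathlib

/-!
A homeomorphism `Ψ(𝒜_X) ≃ₜ Ψ(𝒜_Y)` sends isolated points to isolated points, so it induces a
bijection `f` of `2^{<ω}` and a bijection `g : X ≃ Y` with `f[x̂]` and `ĝx` equal up to finite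
error. As `|x̂ ∩ x̂'|` is one more than the first index where `x` and `x'` differ, on an infinite
part of an uncountable `X` where these errors are bounded by `n` the splitting levels of `x, x'`
and of `gx, gx'` differ by at most `2n`, and an infinite set has infinitely many splitting levels.

Now fix `X₀` of size `κ` and, for each `w ∈ 2^ω`, copy `X₀` into `2^ω` by writing `z n` at position
`2 ^ code (w↾n)` and `0` elsewhere. All copies are homeomorphic to `X₀`, the splitting levels of
the copy `X_w` are of the form `2 ^ code (w↾n)`, and for `w ≠ w'` these levels eventually stay far
from those of `w'`. Hence the `Ψ(𝒜_{X_w})` are pairwise non-homeomorphic.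
-/

open Set Cardinal

/-- x̂ = {x↾k : k ∈ ω}: the set of finite initial segments of x ∈ 2^ω,
as a subset of 2^{<ω} (represented by `List Bool`). -/
def hatSet (x : ℕ → Bool) : Set (List Bool) :=
  {l | ∀ i : Fin l.length, l.get i = x i}

/-- 𝒜_X = {x̂ : x ∈ X}: the branch family of X ⊆ 2^ω. -/
def branchFamily (X : Set (ℕ → Bool)) : Set (Set (List Bool)) :=
  hatSet '' X

/-- The Ψ-space topology on ι ⊕ 𝒜 for an AD family 𝒜 on a countable set ι. -/
def psiTop {ι : Type} (𝒜 : Set (Set ι)) : TopologicalSpace (ι ⊕ ↥𝒜) :=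
  TopologicalSpace.generateFrom
    ({U | ∃ n : ι, U = {Sum.inl n}} ∪
     {U | ∃ (A : ↥𝒜) (F : Finset ι),
        U = insert (Sum.inr A) (Sum.inl '' ((A : Set ι) \ ↑F))})

open Function PiNat Topology
open scoped symmDiff

section PsiSpace

variable {ι : Type} {𝒜 ℬ : Set (Set ι)}

theorem isOpen_psiTop_singleton_inl (a : ι) : IsOpen[psiTop 𝒜] {Sum.inl a} :=
  TopologicalSpace.isOpen_generateFrom_of_mem (Or.inl ⟨a, rfl⟩)

theorem isOpen_psiTop_insert_inr (A : 𝒜) :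
    IsOpen[psiTop 𝒜] (insert (Sum.inr A) (Sum.inl '' (A : Set ι))) :=
  TopologicalSpace.isOpen_generateFrom_of_mem (Or.inr ⟨A, ∅, by simp⟩)

theorem finite_diff_preimage_inl_of_isOpen_psiTop {U : Set (ι ⊕ 𝒜)}
    (hU : IsOpen[psiTop 𝒜] U) {A : 𝒜} (hA : Sum.inr A ∈ U) :
    ((A : Set ι) \ Sum.inl ⁻¹' U).Finite := by
  induction hU generalizing A with
  | basic U hU =>
    rcases hU with ⟨a, rfl⟩ | ⟨B, F, rfl⟩
    · simp at hA
    · obtain rfl : A = B := by simpa using hA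
      refine F.finite_toSet.subset fun a ⟨ha, haU⟩ => ?_
      by_contra haF
      exact haU (Or.inr ⟨a, ⟨ha, haF⟩, rfl⟩)
  | univ => simp
  | inter U V _ _ ihU ihV =>
    rw [preimage_inter, sdiff_inter]
    exact (ihU hA.1).union (ihV hA.2)
  | sUnion S _ ih =>
    obtain ⟨U, hUS, hAU⟩ := mem_sUnion.1 hA
    exact (ih U hUS hAU).subset
      (sdiff_subset_sdiff_right (preimage_mono (subset_sUnion_of_mem hUS)))

theorem not_isOpen_psiTop_singleton_inr {A : 𝒜} (hA : (A : Set ι).Infinite) :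
    ¬ IsOpen[psiTop 𝒜] {Sum.inr A} := fun h => by
  have := finite_diff_preimage_inl_of_isOpen_psiTop h rfl
  rw [preimage_singleton_eq_empty.2 (by simp), sdiff_empty] at this
  exact hA this

theorem isLeft_psiTop_homeomorph_inl (hℬ : ∀ B ∈ ℬ, B.Infinite)
    (h : @Homeomorph (ι ⊕ 𝒜) (ι ⊕ ℬ) (psiTop 𝒜) (psiTop ℬ)) (a : ι) :
    (h (Sum.inl a)).isLeft := by
  let _ := psiTop 𝒜
  let _ := psiTop ℬ
  rcases hb : h (Sum.inl a) with b | B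
  · rfl
  · have hopen := h.isOpen_image.2 (isOpen_psiTop_singleton_inl a)
    rw [image_singleton, hb] at hopen
    exact absurd hopen (not_isOpen_psiTop_singleton_inr (hℬ B B.2))

theorem isLeft_psiTop_homeomorph (h𝒜 : ∀ A ∈ 𝒜, A.Infinite) (hℬ : ∀ B ∈ ℬ, B.Infinite)
    (h : @Homeomorph (ι ⊕ 𝒜) (ι ⊕ ℬ) (psiTop 𝒜) (psiTop ℬ)) (x : ι ⊕ 𝒜) :
    (h x).isLeft = x.isLeft := by
  let _ := psiTop 𝒜
  let _ := psiTop ℬ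
  rcases x with a | A
  · exact isLeft_psiTop_homeomorph_inl hℬ h a
  · rcases hb : h (Sum.inr A) with b | B
    · have := isLeft_psiTop_homeomorph_inl h𝒜 h.symm b
      rw [← hb, h.symm_apply_apply] at this
      exact absurd this (by simp)
    · rfl

theorem Equiv.exists_coe_eq_sumMap {α β γ δ : Type*} (e : α ⊕ β ≃ γ ⊕ δ)
    (he : ∀ x, (e x).isLeft = x.isLeft) : ∃ (f : α ≃ γ) (g : β ≃ δ), ⇑e = Sum.map f g := by
  refine ⟨sumIsLeft.symm.trans ((e.subtypeEquiv fun x => by rw [he]).trans sumIsLeft),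
    sumIsRight.symm.trans ((e.subtypeEquiv fun x => ?_).trans sumIsRight), ?_⟩
  · rw [← Sum.not_isLeft, ← Sum.not_isLeft, he]
  · funext x
    cases x <;> simp

theorem finite_image_diff_of_psiTop_homeomorph
    (h : @Homeomorph (ι ⊕ 𝒜) (ι ⊕ ℬ) (psiTop 𝒜) (psiTop ℬ)) {f : ι ≃ ι} {G : 𝒜 ≃ ℬ}
    (hfG : ⇑h = Sum.map f G) (A : 𝒜) : (f '' A \ G A).Finite := by
  let _ := psiTop 𝒜
  let _ := psiTop ℬ
  set V := insert (Sum.inr (G A)) (Sum.inl '' (G A : Set ι))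
  have hU : IsOpen (h ⁻¹' V) := (isOpen_psiTop_insert_inr (G A)).preimage h.continuous
  have hA : Sum.inr A ∈ h ⁻¹' V := by simp [V, hfG]
  have hpre : Sum.inl ⁻¹' (h ⁻¹' V) = f ⁻¹' G A := by
    ext a
    simp [V, hfG]
  rw [← image_sdiff_preimage, ← hpre]
  exact (finite_diff_preimage_inl_of_isOpen_psiTop hU hA).image f

theorem exists_equiv_finite_symmDiff_of_psiTop_homeomorph (h𝒜 : ∀ A ∈ 𝒜, A.Infinite)
    (hℬ : ∀ B ∈ ℬ, B.Infinite) (h : @Homeomorph (ι ⊕ 𝒜) (ι ⊕ ℬ) (psiTop 𝒜) (psiTop ℬ)) :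
    ∃ (f : ι ≃ ι) (G : 𝒜 ≃ ℬ), ∀ A : 𝒜, ((f '' A) ∆ (G A : Set ι)).Finite := by
  let _ := psiTop 𝒜
  let _ := psiTop ℬ
  obtain ⟨f, G, hfG⟩ := Equiv.exists_coe_eq_sumMap h.toEquiv (isLeft_psiTop_homeomorph h𝒜 hℬ h)
  rw [Homeomorph.coe_toEquiv] at hfG
  refine ⟨f, G, fun A => ?_⟩
  have hsymm : ⇑h.symm = Sum.map f.symm G.symm := by
    funext y
    rw [h.symm_apply_eq, hfG]
    cases y <;> simp
  have hback := (finite_image_diff_of_psiTop_homeomorph h.symm hsymm (G A)).image f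
  rw [image_sdiff f.injective, Equiv.image_symm_image, Equiv.symm_apply_apply] at hback
  rw [symmDiff_def]
  exact (finite_image_diff_of_psiTop_homeomorph h hfG A).union hback

end PsiSpace

def initSeg (x : ℕ → Bool) (n : ℕ) : List Bool := List.ofFn fun i : Fin n => x i

theorem initSeg_injective (x : ℕ → Bool) : Injective (initSeg x) := fun m n h => by
  simpa [initSeg] using congrArg List.length h

theorem initSeg_eq_initSeg_iff {x y : ℕ → Bool} {n : ℕ} :
    initSeg x n = initSeg y n ↔ y ∈ cylinder x n := by
  simp [initSeg, List.ofFn_inj, funext_iff, Fin.forall_iff, mem_cylinder_iff, eq_comm]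

theorem mem_hatSet_iff {x : ℕ → Bool} {l : List Bool} : l ∈ hatSet x ↔ initSeg x l.length = l := by
  simp [hatSet, initSeg, List.ext_get_iff, Fin.forall_iff, eq_comm]

theorem hatSet_eq_range (x : ℕ → Bool) : hatSet x = range (initSeg x) := by
  ext l
  refine ⟨fun h => ⟨_, mem_hatSet_iff.1 h⟩, ?_⟩
  rintro ⟨n, rfl⟩
  simp [mem_hatSet_iff, initSeg]

theorem hatSet_infinite (x : ℕ → Bool) : (hatSet x).Infinite := by
  rw [hatSet_eq_range]
  exact infinite_range_of_injective (initSeg_injective x)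

theorem hatSet_inter_hatSet {x y : ℕ → Bool} (h : x ≠ y) :
    hatSet x ∩ hatSet y = initSeg x '' Iic (firstDiff x y) := by
  ext l
  simp only [hatSet_eq_range, mem_inter_iff, mem_range, mem_image, mem_Iic]
  constructor
  · rintro ⟨⟨n, rfl⟩, m, hm⟩
    obtain rfl : m = n := by simpa [initSeg] using congrArg List.length hm
    exact ⟨m, (mem_cylinder_iff_le_firstDiff h m).1 (initSeg_eq_initSeg_iff.1 hm), rfl⟩
  · rintro ⟨n, hn, rfl⟩
    exact ⟨⟨n, rfl⟩, n, initSeg_eq_initSeg_iff.2 ((mem_cylinder_iff_le_firstDiff h n).2 hn)⟩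

theorem finite_hatSet_inter_hatSet {x y : ℕ → Bool} (h : x ≠ y) :
    (hatSet x ∩ hatSet y).Finite :=
  hatSet_inter_hatSet h ▸ (finite_Iic _).image _

theorem ncard_hatSet_inter_hatSet {x y : ℕ → Bool} (h : x ≠ y) :
    (hatSet x ∩ hatSet y).ncard = firstDiff x y + 1 := by
  rw [hatSet_inter_hatSet h, ncard_image_of_injective _ (initSeg_injective x), ← Finset.coe_Iic,
    ncard_coe_finset, Nat.card_Iic]

theorem hatSet_injective : Injective hatSet := fun x y h => by
  by_contra hne
  have hfin := finite_hatSet_inter_hatSet hne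
  rw [← h, inter_self] at hfin
  exact hatSet_infinite x hfin

def splitSet {E : ℕ → Type*} (X : Set (∀ n, E n)) : Set ℕ :=
  {d | ∃ x ∈ X, ∃ y ∈ X, x ≠ y ∧ firstDiff x y = d}

theorem Set.Infinite.splitSet {E : ℕ → Type*} [∀ n, Finite (E n)] {X : Set (∀ n, E n)}
    (hX : X.Infinite) : (splitSet X).Infinite := fun hfin => by
  obtain ⟨N, hN⟩ := hfin.bddAbove
  refine hX (Finite.of_finite_image (f := fun x (i : Fin (N + 1)) => x i) (toFinite _) ?_)
  intro x hx y hy hxy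
  by_contra hne
  exact apply_firstDiff_ne hne (congrFun hxy ⟨_, Nat.lt_succ_of_le (hN ⟨x, hx, y, hy, hne, rfl⟩)⟩)

theorem Set.ncard_inter_le_ncard_inter_add {α : Type*} {P P' Q Q' : Set α}
    (hQ : (Q ∩ Q').Finite) (h : (P ∆ Q).Finite) (h' : (P' ∆ Q').Finite) :
    (P ∩ P').ncard ≤ (Q ∩ Q').ncard + (P ∆ Q).ncard + (P' ∆ Q').ncard := by
  have hsub : P ∩ P' ⊆ Q ∩ Q' ∪ P ∆ Q ∪ P' ∆ Q' := by
    intro p hp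
    by_cases hq : p ∈ Q <;> by_cases hq' : p ∈ Q' <;> simp_all [symmDiff_def]
  calc (P ∩ P').ncard ≤ (Q ∩ Q' ∪ P ∆ Q ∪ P' ∆ Q').ncard :=
        ncard_le_ncard hsub ((hQ.union h).union h')
    _ ≤ (Q ∩ Q' ∪ P ∆ Q).ncard + (P' ∆ Q').ncard := ncard_union_le _ _
    _ ≤ (Q ∩ Q').ncard + (P ∆ Q).ncard + (P' ∆ Q').ncard := by
        gcongr
        exact ncard_union_le _ _

theorem firstDiff_near_of_finite_symmDiff {f : List Bool → List Bool} (hf : Injective f)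
    {x x' y y' : ℕ → Bool} (hx : x ≠ x') (hy : y ≠ y')
    (h : ((f '' hatSet x) ∆ hatSet y).Finite) (h' : ((f '' hatSet x') ∆ hatSet y').Finite) :
    firstDiff x x' ≤ firstDiff y y' + ((f '' hatSet x) ∆ hatSet y).ncard +
        ((f '' hatSet x') ∆ hatSet y').ncard ∧
      firstDiff y y' ≤ firstDiff x x' + ((f '' hatSet x) ∆ hatSet y).ncard +
        ((f '' hatSet x') ∆ hatSet y').ncard := by
  have hfx : (f '' hatSet x ∩ f '' hatSet x').ncard = firstDiff x x' + 1 := by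
    rw [← image_inter hf, ncard_image_of_injective _ hf, ncard_hatSet_inter_hatSet hx]
  have hfin : (f '' hatSet x ∩ f '' hatSet x').Finite := by
    rw [← image_inter hf]
    exact (finite_hatSet_inter_hatSet hx).image f
  have hle := ncard_inter_le_ncard_inter_add (finite_hatSet_inter_hatSet hy) h h'
  have hge := ncard_inter_le_ncard_inter_add hfin (symmDiff_comm (f '' hatSet x) _ ▸ h)
    (symmDiff_comm (f '' hatSet x') _ ▸ h')
  rw [symmDiff_comm (hatSet y), symmDiff_comm (hatSet y')] at hge
  rw [hfx, ncard_hatSet_inter_hatSet hy] at hle hge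
  omega

theorem exists_equiv_finite_symmDiff_of_psi_homeomorph {X Y : Set (ℕ → Bool)}
    (h : @Homeomorph (List Bool ⊕ branchFamily X) (List Bool ⊕ branchFamily Y)
      (psiTop (branchFamily X)) (psiTop (branchFamily Y))) :
    ∃ (f : List Bool ≃ List Bool) (g : X ≃ Y), ∀ x : X,
      ((f '' hatSet x) ∆ hatSet (g x)).Finite := by
  have hinf : ∀ Z, ∀ A ∈ branchFamily Z, A.Infinite := by
    rintro Z _ ⟨z, -, rfl⟩
    exact hatSet_infinite z
  obtain ⟨f, G, hfG⟩ := exists_equiv_finite_symmDiff_of_psiTop_homeomorph (hinf X) (hinf Y) h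
  let eX := Equiv.Set.image hatSet X hatSet_injective
  let eY := Equiv.Set.image hatSet Y hatSet_injective
  refine ⟨f, eX.trans (G.trans eY.symm), fun x => ?_⟩
  have hG : hatSet (eY.symm (G (eX x))) = G (eX x) :=
    congrArg Subtype.val (eY.apply_symm_apply _)
  change ((f '' hatSet x) ∆ hatSet (eY.symm (G (eX x)))).Finite
  rw [hG]
  exact hfG (eX x)

theorem infinite_splitSet_near_of_psi_homeomorph {X Y : Set (ℕ → Bool)} (hX : ¬ X.Countable)
    (h : @Homeomorph (List Bool ⊕ branchFamily X) (List Bool ⊕ branchFamily Y)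
      (psiTop (branchFamily X)) (psiTop (branchFamily Y))) :
    ∃ c, {d ∈ splitSet X | ∃ d' ∈ splitSet Y, d ≤ d' + c ∧ d' ≤ d + c}.Infinite := by
  obtain ⟨f, g, hfg⟩ := exists_equiv_finite_symmDiff_of_psi_homeomorph h
  obtain ⟨n, hn⟩ :
      ∃ n, ((fun x : X => ((f '' hatSet x) ∆ hatSet (g x)).ncard) ⁻¹' {n}).Infinite := by
    have : Uncountable X := ⟨hX⟩
    obtain ⟨n, hn⟩ := exists_uncountable_fiber
      (fun x : X => ((f '' hatSet x) ∆ hatSet (g x)).ncard) (by simp)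
    exact ⟨n, infinite_coe_iff.1 inferInstance⟩
  have hS := hn.image Subtype.val_injective.injOn
  refine ⟨n + n, hS.splitSet.mono ?_⟩
  rintro _ ⟨_, ⟨x, hx, rfl⟩, _, ⟨x', hx', rfl⟩, hne, rfl⟩
  have hgne : (g x : ℕ → Bool) ≠ g x' := fun e =>
    hne (congrArg Subtype.val (g.injective (Subtype.ext e)))
  obtain ⟨hle, hge⟩ := firstDiff_near_of_finite_symmDiff f.injective hne hgne (hfg x) (hfg x')
  simp only [mem_preimage, mem_singleton_iff] at hx hx'
  exact ⟨⟨x, x.2, x', x'.2, hne, rfl⟩, _, ⟨g x, (g x).2, g x', (g x').2, hgne, rfl⟩,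
    by omega, by omega⟩

-- `res w n` is `w↾n` reversed, so it grows by `cons` and its code increases with `n`.
def level (w : ℕ → Bool) (n : ℕ) : ℕ := 2 ^ Encodable.encode (res w n)

theorem strictMono_encode_res (w : ℕ → Bool) : StrictMono fun n => Encodable.encode (res w n) :=
  strictMono_nat_of_lt_succ fun n => by
    simpa [res_succ, Encodable.encode_list_cons, Nat.lt_succ_iff] using Nat.right_le_pair _ _

theorem strictMono_level (w : ℕ → Bool) : StrictMono (level w) :=
  (pow_right_strictMono₀ (M₀ := ℕ) one_lt_two).comp (strictMono_encode_res w)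

theorem le_of_two_pow_near {a b c : ℕ} (hab : a ≠ b) (h : 2 ^ a ≤ 2 ^ b + c)
    (h' : 2 ^ b ≤ 2 ^ a + c) : a ≤ c := by
  rcases hab.lt_or_gt with hlt | hlt
  · have h2 : 2 ^ a * 2 ≤ 2 ^ b := by rw [← pow_succ]; exact Nat.pow_le_pow_right two_pos hlt
    have := Nat.lt_two_pow_self (n := a)
    omega
  · obtain ⟨k, rfl⟩ := Nat.exists_eq_add_of_lt hlt
    have h2 : 2 ^ b ≤ 2 ^ (b + k) := Nat.pow_le_pow_right two_pos (by omega)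
    have := Nat.lt_two_pow_self (n := b + k)
    rw [pow_succ] at h
    omega

theorem finite_setOf_level_near {w w' : ℕ → Bool} (hw : w ≠ w') (c : ℕ) :
    {n | ∃ m, level w n ≤ level w' m + c ∧ level w' m ≤ level w n + c}.Finite := by
  refine (finite_Iic (max (firstDiff w' w) c)).subset fun n ⟨m, hle, hge⟩ => ?_
  by_contra hn
  simp only [mem_Iic, le_max_iff, not_or, not_le] at hn
  have hres : res w n ≠ res w' m := fun e => by
    obtain rfl : n = m := by simpa using congrArg List.length e
    exact hn.1.not_ge
      ((mem_cylinder_iff_le_firstDiff hw.symm n).1 fun i hi => (res_eq_res.1 e hi).symm)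
  have := le_of_two_pow_near (Encodable.encode_injective.ne hres) hle hge
  exact hn.2.not_ge ((strictMono_encode_res w).id_le n |>.trans this)

noncomputable def spread (w z : ℕ → Bool) : ℕ → Bool := extend (level w) z fun _ => false

theorem spread_apply_level (w z : ℕ → Bool) (n : ℕ) : spread w z (level w n) = z n :=
  (strictMono_level w).injective.extend_apply _ _ _

theorem spread_apply_of_notMem_range {w : ℕ → Bool} {m : ℕ} (hm : m ∉ range (level w))
    (z : ℕ → Bool) : spread w z m = false :=
  extend_apply' _ _ _ hm

theorem spread_injective (w : ℕ → Bool) : Injective (spread w) := fun z z' h => funext fun n => by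
  simpa [spread_apply_level] using congrFun h (level w n)

theorem continuous_spread (w : ℕ → Bool) : Continuous (spread w) := by
  refine continuous_pi fun m => ?_
  by_cases hm : m ∈ range (level w)
  · obtain ⟨n, rfl⟩ := hm
    simpa only [spread_apply_level] using continuous_apply n
  · simpa only [spread_apply_of_notMem_range hm] using continuous_const

theorem isEmbedding_spread (w : ℕ → Bool) : IsEmbedding (spread w) :=
  ((continuous_spread w).isClosedEmbedding (spread_injective w)).isEmbedding

theorem firstDiff_spread (w : ℕ → Bool) {z z' : ℕ → Bool} (h : z ≠ z') :
    firstDiff (spread w z) (spread w z') = level w (firstDiff z z') := by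
  refine le_antisymm (not_lt.1 fun hlt => apply_firstDiff_ne h ?_) ?_
  · simpa [spread_apply_level] using apply_eq_of_lt_firstDiff hlt
  · rw [← mem_cylinder_iff_le_firstDiff ((spread_injective w).ne h)]
    intro i hi
    by_cases hm : i ∈ range (level w)
    · obtain ⟨n, rfl⟩ := hm
      rw [spread_apply_level, spread_apply_level]
      exact apply_eq_of_lt_firstDiff ((strictMono_level w).lt_iff_lt.1 hi)
    · rw [spread_apply_of_notMem_range hm, spread_apply_of_notMem_range hm]

theorem splitSet_image_spread_subset (w : ℕ → Bool) (X : Set (ℕ → Bool)) :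
    splitSet (spread w '' X) ⊆ range (level w) := by
  rintro _ ⟨_, ⟨z, -, rfl⟩, _, ⟨z', -, rfl⟩, hne, rfl⟩
  exact ⟨_, (firstDiff_spread w fun e => hne (congrArg _ e)).symm⟩

theorem not_nonempty_psi_homeomorph_image_spread {X : Set (ℕ → Bool)} (hX : ¬ X.Countable)
    {w w' : ℕ → Bool} (hw : w ≠ w') :
    ¬ Nonempty (@Homeomorph (List Bool ⊕ branchFamily (spread w '' X))
      (List Bool ⊕ branchFamily (spread w' '' X))
      (psiTop (branchFamily (spread w '' X))) (psiTop (branchFamily (spread w' '' X)))) := by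
  rintro ⟨h⟩
  have hX' : ¬ (spread w '' X).Countable := fun hc =>
    hX (countable_of_injective_of_countable_image (spread_injective w).injOn hc)
  obtain ⟨c, hc⟩ := infinite_splitSet_near_of_psi_homeomorph hX' h
  refine hc (((finite_setOf_level_near hw c).image (level w)).subset ?_)
  rintro d ⟨hd, d', hd', hle, hge⟩
  obtain ⟨n, rfl⟩ := splitSet_image_spread_subset w X hd
  obtain ⟨m, rfl⟩ := splitSet_image_spread_subset w' X hd'
  exact ⟨n, ⟨m, hle, hge⟩, rfl⟩

theorem exists_continuum_homeomorphic_sets_nonhomeomorphic_psi_general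
    (κ : Cardinal) (hκ : Cardinal.aleph0 < κ) (hκc : κ ≤ Cardinal.continuum) :
    ∃ 𝒳 : Set (Set (ℕ → Bool)),
      Cardinal.mk ↥𝒳 = Cardinal.continuum ∧
      (∀ X ∈ 𝒳, Cardinal.mk ↥X = κ) ∧
      (∀ X ∈ 𝒳, ∀ Y ∈ 𝒳, Nonempty (↥X ≃ₜ ↥Y)) ∧
      (∀ X ∈ 𝒳, ∀ Y ∈ 𝒳, X ≠ Y →
        ¬ Nonempty (@Homeomorph ((List Bool) ⊕ ↥(branchFamily X))
            ((List Bool) ⊕ ↥(branchFamily Y))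
            (psiTop (branchFamily X)) (psiTop (branchFamily Y)))) := by
  obtain ⟨X, hX⟩ := le_mk_iff_exists_set.1 (by simpa using hκc : κ ≤ #(ℕ → Bool))
  have hXunc : ¬ X.Countable := by
    rw [← le_aleph0_iff_set_countable, hX]
    exact hκ.not_ge
  have hinj : Injective fun w => spread w '' X := fun w w' he => by
    by_contra hw
    refine not_nonempty_psi_homeomorph_image_spread hXunc hw ?_
    simp only at he
    rw [he]
    exact ⟨@Homeomorph.refl _ (psiTop _)⟩
  refine ⟨range fun w => spread w '' X, ?_, ?_, ?_, ?_⟩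
  · simp [mk_range_eq _ hinj]
  · rintro _ ⟨w, rfl⟩
    rw [mk_image_eq (spread_injective w), hX]
  · rintro _ ⟨w, rfl⟩ _ ⟨w', rfl⟩
    exact ⟨((isEmbedding_spread w).homeomorphImage X).symm.trans
      ((isEmbedding_spread w').homeomorphImage X)⟩
  · rintro _ ⟨w, rfl⟩ _ ⟨w', rfl⟩ hne
    exact not_nonempty_psi_homeomorph_image_spread hXunc fun e => hne (e ▸ rfl)

/-- Theorem 14: for every uncountable κ ≤ 𝔠 with cf(κ) > ω there are 𝔠 many
pairwise distinct subsets of 2^ω of size κ, pairwise homeomorphic as subspaces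
of 2^ω, whose Ψ-spaces Ψ(𝒜_X) are pairwise non-homeomorphic. -/
theorem exists_continuum_homeomorphic_sets_nonhomeomorphic_psi
    (κ : Cardinal) (hκ : Cardinal.aleph0 < κ) (hκc : κ ≤ Cardinal.continuum)
    (hcf : Cardinal.aleph0 < κ.ord.cof) :
    ∃ 𝒳 : Set (Set (ℕ → Bool)),
      Cardinal.mk ↥𝒳 = Cardinal.continuum ∧
      (∀ X ∈ 𝒳, Cardinal.mk ↥X = κ) ∧
      (∀ X ∈ 𝒳, ∀ Y ∈ 𝒳, Nonempty (↥X ≃ₜ ↥Y)) ∧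
      (∀ X ∈ 𝒳, ∀ Y ∈ 𝒳, X ≠ Y →
        ¬ Nonempty (@Homeomorph ((List Bool) ⊕ ↥(branchFamily X))
            ((List Bool) ⊕ ↥(branchFamily Y))
            (psiTop (branchFamily X)) (psiTop (branchFamily Y)))) :=
  exists_continuum_homeomorphic_sets_nonhomeomorphic_psi_general κ hκ hκc
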